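/- Let 𝒢 be a sequence of covers with inverse limit (X,f). Let 𝒞 = (𝒞_n)_{n∈ℕ} be a system of circuits enumerated by ℕ that expresses every f-invariant Borel probability measure, with 𝒞_n = {c(n,1),…,c(n,d_n)}. Suppose there are nonnegative integers m_n(i,j) (n ∈ ℕ, 1 ≤ i ≤ d_{n+1}, 1 ≤ j ≤ d_n) such that (φ_n)_*(c(n+1,i)) = Σ_{j=1}^{d_n} m_n(i,j)·c(n,j) for all n and i, and define the winding matrices M̄_n with entries m̄_n(i,j) := (Per(c(n,j))/Per(c(n+1,i)))·m_n(i,j). Suppose there exist real numbers ε_n > 0 with m̄_n(i,j) ≥ ε_n for all n, i, j, and such that Π_{i=n}^{∞} (1 − d_i·ε_i) = 0 for every n ∈ ℕ. Then (X,f) is uniquely ergodic, i.e. it has exactly one f-invariant Borel probability measure. -/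

import Mathlib

open Filter Topology MeasureTheory

/-- A (directed) graph on a vertex set `V`: an edge relation `E ⊆ V × V`
whose two coordinate projections are surjective. -/
structure DirGraph (V : Type) : Type where
  E : Set (V × V)
  surj_init : ∀ v : V, ∃ u : V, (v, u) ∈ E
  surj_term : ∀ v : V, ∃ u : V, (u, v) ∈ E

/-- A walk of length `l` in `G`. -/
def IsWalk {V : Type} (G : DirGraph V) (l : ℕ) (w : Fin (l + 1) → V) : Prop :=
  ∀ i : Fin l, (w i.castSucc, w i.succ) ∈ G.E

/-- The edge set of a walk. -/
def walkEdges {V : Type} {l : ℕ} (w : Fin (l + 1) → V) : Set (V × V) :=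
  {e | ∃ i : Fin l, e = (w i.castSucc, w i.succ)}

/-- `c` is the edge set of a circuit of `G`: a closed walk whose vertices are
pairwise distinct except that the initial and terminal vertices coincide. -/
def IsCircuitIn {V : Type} (G : DirGraph V) (c : Set (V × V)) : Prop :=
  ∃ l : ℕ, 0 < l ∧ ∃ w : Fin (l + 1) → V,
    IsWalk G l w ∧ w (Fin.last l) = w 0 ∧
    (∀ i j : Fin (l + 1), i < j → w i = w j → i = 0 ∧ j = Fin.last l) ∧
    c = walkEdges w

/-- The set `𝒞(G)` of circuit graphs of `G` (a circuit graph is identified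
with its edge set). -/
def circuitsOf {V : Type} (G : DirGraph V) : Set (Set (V × V)) :=
  {c | IsCircuitIn G c}

/-- The vertex set of a circuit graph (given by its edge set). -/
def circVerts {V : Type} (c : Set (V × V)) : Set V :=
  {v | ∃ e ∈ c, v = e.1 ∨ v = e.2}

/-- The element `Σ_{e ∈ E(c)} e` of the vector space with basis the edges,
associated with a circuit graph `c`. -/
noncomputable def circVec {V : Type} (c : Set (V × V)) : V × V → ℝ :=
  c.indicator fun _ => 1

/-- `c̃ = (1/Per(c))·c` where `Per(c)` is the number of edges of `c`. -/
noncomputable def circTilde {V : Type} (c : Set (V × V)) : V × V → ℝ :=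
  fun e => ((Set.ncard c : ℝ))⁻¹ * circVec c e

/-- Membership in `ℳ(G)`: nonnegative coefficients supported on the edges. -/
def MemM {V : Type} [Fintype V] (G : DirGraph V) (a : V × V → ℝ) : Prop :=
  (∀ e, 0 ≤ a e) ∧ ∀ e, e ∉ G.E → a e = 0

/-- Membership in `ℐ(G)`: at every vertex the incoming coefficient sum equals
the outgoing coefficient sum. -/
def MemI {V : Type} [Fintype V] (G : DirGraph V) (a : V × V → ℝ) : Prop :=
  MemM G a ∧ ∀ v : V, (∑ u : V, a (u, v)) = ∑ u : V, a (v, u)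

/-- Membership in `𝒫(G)`: elements of `ℐ(G)` of total mass `1`. -/
def MemP {V : Type} [Fintype V] (G : DirGraph V) (a : V × V → ℝ) : Prop :=
  MemI G a ∧ (∑ e : V × V, a e) = 1

/-- The action of a map on edges. -/
def edgeMap {V₁ V₂ : Type} (ψ : V₁ → V₂) (e : V₁ × V₁) : V₂ × V₂ := (ψ e.1, ψ e.2)

/-- `ψ : G₁ → G₂` is a cover: an edge-surjective, positive-directional
graph homomorphism. -/
structure IsCover {V₁ V₂ : Type} (G₁ : DirGraph V₁) (G₂ : DirGraph V₂) (ψ : V₁ → V₂) : Prop where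
  hom : ∀ u v : V₁, (u, v) ∈ G₁.E → (ψ u, ψ v) ∈ G₂.E
  edgeSurj : ∀ e ∈ G₂.E, ∃ u v : V₁, (u, v) ∈ G₁.E ∧ (ψ u, ψ v) = e
  posDir : ∀ u v v' : V₁, (u, v) ∈ G₁.E → (u, v') ∈ G₁.E → ψ v = ψ v'

/-- The induced linear map `ψ_*` on edge vectors: the coefficient of an edge `e`
of the target is the sum of the coefficients of its preimages. -/
noncomputable def pushVec {V₁ V₂ : Type} (ψ : V₁ → V₂) (a : V₁ × V₁ → ℝ) : V₂ × V₂ → ℝ :=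
  fun e => ∑ᶠ e' ∈ {e' : V₁ × V₁ | edgeMap ψ e' = e}, a e'

/-- Euclidean distance on finite-dimensional coordinate spaces. -/
noncomputable def dE {ι : Type} [Fintype ι] (a b : ι → ℝ) : ℝ :=
  Real.sqrt (∑ i : ι, (a i - b i) ^ 2)

/-- A sequence of covers `G₀ ← G₁ ← G₂ ← ⋯` of finite graphs, with `G₀`
the one-vertex graph (with a single loop). -/
structure CoverSystem : Type 1 where
  V : ℕ → Type
  fintypeV : ∀ n, Fintype (V n)
  G : ∀ n, DirGraph (V n)
  φ : ∀ n, V (n + 1) → V n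
  cover : ∀ n, IsCover (G (n + 1)) (G n) (φ n)
  V0_single : ∀ x y : V 0, x = y

namespace CoverSystem

instance (S : CoverSystem) (n : ℕ) : Fintype (S.V n) := S.fintypeV n
instance (S : CoverSystem) (n : ℕ) : TopologicalSpace (S.V n) := ⊥
instance (S : CoverSystem) (n : ℕ) : DiscreteTopology (S.V n) := ⟨rfl⟩

/-- `φ_{n+k, n}` as a composition of the covering maps. -/
def phiIter (S : CoverSystem) (n : ℕ) : ∀ k : ℕ, S.V (n + k) → S.V n
  | 0 => fun v => v
  | k + 1 => fun v => S.phiIter n k (S.φ (n + k) v)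

/-- `φ_{m,n} : V m → V n` for `n ≤ m`. -/
def phiLE (S : CoverSystem) {m n : ℕ} (h : n ≤ m) (v : S.V m) : S.V n :=
  S.phiIter n (m - n) (cast (congrArg S.V (Nat.add_sub_cancel' h).symm) v)

/-- The inverse limit space `X` of the sequence of covers. -/
def X (S : CoverSystem) : Type :=
  { x : ∀ n, S.V n // ∀ n, S.φ n (x (n + 1)) = x n }

instance (S : CoverSystem) : TopologicalSpace S.X :=
  inferInstanceAs (TopologicalSpace { x : ∀ n, S.V n // ∀ n, S.φ n (x (n + 1)) = x n })

instance (S : CoverSystem) : MeasurableSpace S.X := borel S.X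
instance (S : CoverSystem) : BorelSpace S.X := ⟨rfl⟩

/-- The projection `φ_{∞,n} : X → V n`. -/
def proj (S : CoverSystem) (x : S.X) (n : ℕ) : S.V n := Subtype.val x n

/-- `f` is the shift map of the inverse limit: it is compatible with all the
edge relations (this determines `f` uniquely). -/
def IsLimitMap (S : CoverSystem) (f : S.X → S.X) : Prop :=
  ∀ (x : S.X) (n : ℕ), (S.proj x n, S.proj (f x) n) ∈ (S.G n).E

/-- `U(v) = φ_{∞,n}⁻¹(v)`. -/
def USet (S : CoverSystem) {n : ℕ} (v : S.V n) : Set S.X := {x | S.proj x n = v}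

/-- `U(e) = U(u) ∩ f⁻¹(U(v))` for an edge `e = (u,v)`. -/
def UEdge (S : CoverSystem) (f : S.X → S.X) {n : ℕ} (e : S.V n × S.V n) : Set S.X :=
  {x | S.proj x n = e.1 ∧ S.proj (f x) n = e.2}

/-- `μ` is an `f`-invariant Borel measure. -/
def Invariant (S : CoverSystem) (f : S.X → S.X) (μ : Measure S.X) : Prop :=
  ∀ B : Set S.X, MeasurableSet B → μ (f ⁻¹' B) = μ B

/-- `μ` is ergodic: every invariant Borel set is null or conull. -/
def ErgodicM (S : CoverSystem) (f : S.X → S.X) (μ : Measure S.X) : Prop :=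
  ∀ B : Set S.X, MeasurableSet B → f ⁻¹' B = B → μ B = 0 ∨ μ B = 1

/-- The vector `μ_n = Σ_{e ∈ E_n} μ(U(e))·e ∈ Δ_n` of a measure `μ`. -/
noncomputable def muVec (S : CoverSystem) (f : S.X → S.X) (μ : Measure S.X) (n : ℕ) :
    S.V n × S.V n → ℝ :=
  fun e => (μ (S.UEdge f e)).toReal

/-- `Δ_∞`: compatible sequences of elements of the simplices `Δ_n = 𝒫(G_n)`. -/
def DeltaInf (S : CoverSystem) : Set (∀ n, S.V n × S.V n → ℝ) :=
  {x | (∀ n, MemP (S.G n) (x n)) ∧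
    ∀ m n : ℕ, ∀ h : n ≤ m, pushVec (S.phiLE h) (x m) = x n}

/-- `C` is a system of circuits enumerated by `N'`. -/
def IsCircuitSystem (S : CoverSystem) (N' : Set ℕ)
    (C : ∀ n, Set (Set (S.V n × S.V n))) : Prop :=
  ∀ n ∈ N', C n ⊆ circuitsOf (S.G n)

/-- The system of circuits `C` expresses the measure `μ`. -/
def Expresses (S : CoverSystem) (f : S.X → S.X) (μ : Measure S.X)
    (N' : Set ℕ) (C : ∀ n, Set (Set (S.V n × S.V n))) : Prop :=
  ∀ n ∈ N', ∃ s : Set (S.V n × S.V n) → ℝ,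
    (∀ c ∈ C n, 0 ≤ s c) ∧ ∀ e, S.muVec f μ n e = ∑ᶠ c ∈ C n, s c * circTilde c e

/-- The system of circuits `C` expresses every ergodic invariant Borel
probability measure. -/
def ExpressesAllErgodic (S : CoverSystem) (f : S.X → S.X)
    (N' : Set ℕ) (C : ∀ n, Set (Set (S.V n × S.V n))) : Prop :=
  ∀ μ : Measure S.X, IsProbabilityMeasure μ → S.Invariant f μ → S.ErgodicM f μ →
    S.Expresses f μ N' C

/-- `𝒞̄_∞`: the set of limit sequences of sequences of circuits chosen from `C`. -/
def limitsOf (S : CoverSystem) (N' : Set ℕ)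
    (C : ∀ n, Set (Set (S.V n × S.V n))) : Set (∀ m, S.V m × S.V m → ℝ) :=
  {y | ∃ c : ∀ n, Set (S.V n × S.V n), (∀ n ∈ N', c n ∈ C n) ∧
    ∀ m : ℕ, Filter.Tendsto
      (fun n : ℕ => if h : m ≤ n then dE (pushVec (S.phiLE h) (circTilde (c n))) (y m) else 1)
      (Filter.atTop ⊓ Filter.principal N') (nhds 0)}

end CoverSystem

/-!
Existence: the inverse limit `X` is a nonempty compact metrizable space on which `f` is
continuous, so the Krylov–Bogolyubov averaging argument yields an invariant probability measure.

Uniqueness: an invariant probability measure `μ` is determined by its edge vectors `μₙ`. Write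
`μₙ₊ₖ` as a nonnegative combination of the circuits `c(n+k, ·)` and push it down to level `n`:
the coefficient vector gets multiplied by the winding matrices `M̄ₙ₊ₖ₋₁ ⋯ M̄ₙ`, which are
stochastic with entries at least `εₘ`. Doeblin's contraction brings the coefficient vectors of two
such measures within `2 ∏ₘ (1 - dₘ εₘ)` of each other in `ℓ¹`, and this tends to `0`.
-/

open scoped BoundedContinuousFunction

section KrylovBogolyubov

variable {X : Type*} [MeasurableSpace X]

noncomputable def orbitAverage (f : X → X) (x : X) (N : ℕ) : Measure X :=
  ((N : ENNReal) + 1)⁻¹ • ∑ k ∈ Finset.range (N + 1), Measure.dirac (f^[k] x)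

instance (f : X → X) (x : X) (N : ℕ) : IsProbabilityMeasure (orbitAverage f x N) := by
  constructor
  simp [orbitAverage, ENNReal.inv_mul_cancel]

variable [TopologicalSpace X] [OpensMeasurableSpace X] [MeasurableSingletonClass X]

theorem integral_orbitAverage (f : X → X) (x : X) (N : ℕ) (g : X →ᵇ ℝ) :
    ∫ y, g y ∂orbitAverage f x N = ((N : ℝ) + 1)⁻¹ * ∑ k ∈ Finset.range (N + 1), g (f^[k] x) := by
  rw [orbitAverage, integral_smul_measure, integral_finsetSum_measure
    (fun k _ => g.integrable _)]
  simp only [ENNReal.toReal_inv, integral_dirac, smul_eq_mul]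
  norm_cast

end KrylovBogolyubov

theorem exists_isProbabilityMeasure_measurePreserving {X : Type*} [TopologicalSpace X]
    [TopologicalSpace.MetrizableSpace X] [CompactSpace X] [Nonempty X] [MeasurableSpace X]
    [BorelSpace X] {f : X → X} (hf : Continuous f) :
    ∃ μ : Measure X, IsProbabilityMeasure μ ∧ MeasurePreserving f μ μ := by
  let x₀ : X := Classical.arbitrary X
  let ν : ℕ → ProbabilityMeasure X := fun N => ⟨orbitAverage f x₀ N, inferInstance⟩
  obtain ⟨μ, -, hμ⟩ := isCompact_univ.exists_clusterPt (f := map ν atTop) (by simp)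
  refine ⟨μ, inferInstance, hf.measurable, ?_⟩
  refine ext_of_forall_integral_eq_of_IsFiniteMeasure fun g => ?_
  rw [integral_map hf.aemeasurable g.continuous.aestronglyMeasurable]
  let gf : X →ᵇ ℝ := g.compContinuous ⟨f, hf⟩
  let F : ProbabilityMeasure X → ℝ := fun ρ => ∫ y, gf y ∂ρ - ∫ y, g y ∂ρ
  have hF : Continuous F :=
    (ProbabilityMeasure.continuous_integral_boundedContinuousFunction gf).sub
      (ProbabilityMeasure.continuous_integral_boundedContinuousFunction g)
  have hFν : ∀ N, F (ν N) = ((N : ℝ) + 1)⁻¹ * (g (f^[N + 1] x₀) - g x₀) := by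
    intro N
    have hgf : ∀ k, gf (f^[k] x₀) = g (f^[k + 1] x₀) := fun k => by
      simp [gf, Function.iterate_succ_apply']
    simp only [F, ν, ProbabilityMeasure.coe_mk, integral_orbitAverage, ← mul_sub,
      ← Finset.sum_sub_distrib, hgf, Finset.sum_range_sub (fun k => g (f^[k] x₀))]
    rfl
  have hlim : Tendsto (F ∘ ν) atTop (𝓝 0) := by
    rw [show F ∘ ν = _ from funext hFν]
    refine Tendsto.zero_mul_isBoundedUnder_le ?_ ?_
    · simpa [one_div] using tendsto_one_div_add_atTop_nhds_zero_nat (𝕜 := ℝ)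
    · exact isBoundedUnder_of ⟨2 * ‖g‖, fun N => by
        simpa [Function.comp_def, Real.dist_eq] using g.dist_le_two_norm _ _⟩
  have hFμ : F μ = 0 :=
    eq_of_nhds_neBot (ClusterPt.mono (MapClusterPt.tendsto_comp hF.continuousAt hμ) hlim)
  exact sub_eq_zero.1 hFμ

section StochasticMatrix

open Finset Matrix

namespace Matrix

variable {ι κ : Type*} [Fintype κ] {Q : Matrix ι κ ℝ}

theorem sum_vecMul_of_sum_row_eq_one [Fintype ι] (hQ : ∀ i, ∑ j, Q i j = 1) (s : ι → ℝ) :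
    ∑ j, (s ᵥ* Q) j = ∑ i, s i := by
  simp only [vecMul, dotProduct]
  rw [sum_comm]
  simp [← mul_sum, hQ]

theorem one_sub_card_mul_nonneg [Nonempty ι] {ε : ℝ} (hε : ∀ i j, ε ≤ Q i j)
    (hQ : ∀ i, ∑ j, Q i j = 1) : 0 ≤ 1 - Fintype.card κ * ε := by
  obtain ⟨i⟩ := ‹Nonempty ι›
  have := sum_le_sum fun j (_ : j ∈ univ) => hε i j
  simp only [sum_const, card_univ, nsmul_eq_mul, hQ] at this
  linarith

theorem sum_abs_vecMul_sub_le [Fintype ι] {ε : ℝ} (hε : ∀ i j, ε ≤ Q i j) (hQ : ∀ i, ∑ j, Q i j = 1)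
    {s t : ι → ℝ} (hst : ∑ i, s i = ∑ i, t i) :
    ∑ j, |(s ᵥ* Q) j - (t ᵥ* Q) j| ≤ (1 - Fintype.card κ * ε) * ∑ i, |s i - t i| := by
  -- subtracting `ε` from every entry does not change `(s - t) ᵥ* Q`, as `s - t` has mass zero
  have hshift : ∀ j, (s ᵥ* Q) j - (t ᵥ* Q) j = ∑ i, (s i - t i) * (Q i j - ε) := by
    intro j
    simp only [vecMul, dotProduct, mul_sub, sum_sub_distrib, sub_mul, ← sum_mul, hst]
    ring
  calc ∑ j, |(s ᵥ* Q) j - (t ᵥ* Q) j|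
      ≤ ∑ j, ∑ i, |s i - t i| * (Q i j - ε) := by
        refine sum_le_sum fun j _ => ?_
        rw [hshift]
        refine (abs_sum_le_sum_abs _ _).trans_eq (sum_congr rfl fun i _ => ?_)
        rw [abs_mul, abs_of_nonneg (sub_nonneg.2 (hε i j))]
    _ = (1 - Fintype.card κ * ε) * ∑ i, |s i - t i| := by
        rw [sum_comm, mul_sum]
        refine sum_congr rfl fun i _ => ?_
        rw [← mul_sum, sum_sub_distrib, hQ]
        simp [mul_comm]

end Matrix

variable {ι : ℕ → Type*} [∀ m, Fintype (ι m)] (W : ∀ m, Matrix (ι (m + 1)) (ι m) ℝ)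

/-- `vecMulDown W n k s = s ᵥ* W (n + k - 1) ᵥ* ⋯ ᵥ* W n`. -/
def vecMulDown (n : ℕ) : ∀ k, (ι (n + k) → ℝ) → ι n → ℝ
  | 0, s => s
  | k + 1, s => vecMulDown n k (s ᵥ* W (n + k))

variable {W}

theorem sum_vecMulDown (hW : ∀ m i, ∑ j, W m i j = 1) (n k : ℕ) (s : ι (n + k) → ℝ) :
    ∑ j, vecMulDown W n k s j = ∑ i, s i := by
  induction k with
  | zero => rfl
  | succ k ih => exact (ih _).trans (Matrix.sum_vecMul_of_sum_row_eq_one (hW _) s)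

theorem sum_abs_vecMulDown_sub_le [∀ m, Nonempty (ι m)] {ε : ℕ → ℝ}
    (hε : ∀ m i j, ε m ≤ W m i j) (hW : ∀ m i, ∑ j, W m i j = 1) (n k : ℕ)
    {s t : ι (n + k) → ℝ} (hst : ∑ i, s i = ∑ i, t i) :
    ∑ j, |vecMulDown W n k s j - vecMulDown W n k t j|
      ≤ (∏ m ∈ Finset.Ico n (n + k), (1 - Fintype.card (ι m) * ε m)) * ∑ i, |s i - t i| := by
  induction k with
  | zero => simp [vecMulDown]
  | succ k ih =>
    have hprod_nonneg : 0 ≤ ∏ m ∈ Finset.Ico n (n + k), (1 - Fintype.card (ι m) * ε m) :=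
      Finset.prod_nonneg fun m _ => Matrix.one_sub_card_mul_nonneg (hε m) (hW m)
    calc _ ≤ (∏ m ∈ Finset.Ico n (n + k), (1 - Fintype.card (ι m) * ε m)) *
          ∑ j, |(s ᵥ* W (n + k)) j - (t ᵥ* W (n + k)) j| := by
          refine ih ?_
          rw [Matrix.sum_vecMul_of_sum_row_eq_one (hW _),
            Matrix.sum_vecMul_of_sum_row_eq_one (hW _)]
          exact hst
      _ ≤ (∏ m ∈ Finset.Ico n (n + k), (1 - Fintype.card (ι m) * ε m)) *
          ((1 - Fintype.card (ι (n + k)) * ε (n + k)) * ∑ i, |s i - t i|) :=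
          mul_le_mul_of_nonneg_left (Matrix.sum_abs_vecMul_sub_le (hε _) (hW _) hst) hprod_nonneg
      _ = (∏ m ∈ Finset.Ico n (n + k + 1), (1 - Fintype.card (ι m) * ε m)) *
          ∑ i, |s i - t i| := by
          rw [Finset.prod_Ico_succ_top (Nat.le_add_right n k), mul_assoc]

end StochasticMatrix

theorem exists_le_pos_of_tendsto_prod_one_sub_mul {d : ℕ → ℕ} {ε : ℕ → ℝ} {n : ℕ}
    (h : Tendsto (fun K => ∏ i ∈ Finset.Ico n K, (1 - (d i : ℝ) * ε i)) atTop (𝓝 0)) :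
    ∃ m ≥ n, 0 < d m := by
  by_contra! hd
  have hone : (fun K => ∏ i ∈ Finset.Ico n K, (1 - (d i : ℝ) * ε i)) = fun _ => 1 := by
    funext K
    refine Finset.prod_eq_one fun i hi => ?_
    simp [Nat.le_zero.1 (hd i (Finset.mem_Ico.1 hi).1)]
  rw [hone] at h
  exact one_ne_zero (tendsto_nhds_unique tendsto_const_nhds h)

section EdgeVectors

open Finset

variable {V V₁ V₂ : Type}

theorem sum_circVec [Fintype V] (c : Set (V × V)) : ∑ e, circVec c e = c.ncard := by
  classical
  simp [circVec, Set.indicator_apply, Set.ncard_eq_toFinset_card']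

theorem IsCircuitIn.nonempty {G : DirGraph V} {c : Set (V × V)} (hc : IsCircuitIn G c) :
    c.Nonempty := by
  obtain ⟨l, hl, w, -, -, -, rfl⟩ := hc
  exact ⟨_, ⟨0, hl⟩, rfl⟩

theorem IsCircuitIn.ncard_pos [Finite V] {G : DirGraph V} {c : Set (V × V)}
    (hc : IsCircuitIn G c) : 0 < c.ncard :=
  (Set.ncard_pos).2 hc.nonempty

theorem circTilde_nonneg (c : Set (V × V)) (e : V × V) : 0 ≤ circTilde c e :=
  mul_nonneg (by positivity) (Set.indicator_nonneg (fun _ _ => zero_le_one) e)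

theorem circTilde_le_one (c : Set (V × V)) (e : V × V) : circTilde c e ≤ 1 :=
  mul_le_one₀ (Nat.cast_inv_le_one _) (Set.indicator_nonneg (fun _ _ => zero_le_one) e)
    (Set.indicator_le_self' (fun _ _ => zero_le_one) e)

theorem sum_circTilde [Fintype V] {c : Set (V × V)} (hc : 0 < c.ncard) :
    ∑ e, circTilde c e = 1 := by
  simp only [circTilde, ← mul_sum, sum_circVec]
  exact inv_mul_cancel₀ (by positivity)

noncomputable def circComb {ι : Type} [Fintype ι] (c : ι → Set (V × V)) (s : ι → ℝ) :
    V × V → ℝ :=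
  fun e => ∑ i, s i * circTilde (c i) e

theorem sum_circComb [Fintype V] {ι : Type} [Fintype ι] {c : ι → Set (V × V)}
    (hc : ∀ i, 0 < (c i).ncard) (s : ι → ℝ) : ∑ e, circComb c s e = ∑ i, s i := by
  simp only [circComb]
  rw [sum_comm]
  simp [← mul_sum, sum_circTilde (hc _)]

theorem abs_circComb_sub_le {ι : Type} [Fintype ι] (c : ι → Set (V × V)) (s t : ι → ℝ)
    (e : V × V) : |circComb c s e - circComb c t e| ≤ ∑ i, |s i - t i| := by
  simp only [circComb, ← sum_sub_distrib, ← sub_mul]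
  refine (abs_sum_le_sum_abs _ _).trans (sum_le_sum fun i _ => ?_)
  rw [abs_mul, abs_of_nonneg (circTilde_nonneg _ _)]
  exact mul_le_of_le_one_right (abs_nonneg _) (circTilde_le_one _ _)

theorem pushVec_eq_sum [Fintype V₁] [DecidableEq V₂] (ψ : V₁ → V₂) (a : V₁ × V₁ → ℝ) (e : V₂ × V₂) :
    pushVec ψ a e = ∑ e' with edgeMap ψ e' = e, a e' := by
  rw [pushVec, ← finsum_mem_coe_finset]
  simp

theorem sum_pushVec [Fintype V₁] [Fintype V₂] (ψ : V₁ → V₂) (a : V₁ × V₁ → ℝ) :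
    ∑ e, pushVec ψ a e = ∑ e', a e' := by
  classical
  simp only [pushVec_eq_sum]
  exact sum_fiberwise univ (edgeMap ψ) a

theorem pushVec_sum_mul [Fintype V₁] {ι : Type} [Fintype ι] (ψ : V₁ → V₂) (r : ι → ℝ)
    (a : ι → V₁ × V₁ → ℝ) :
    pushVec ψ (fun e' => ∑ i, r i * a i e') = fun e => ∑ i, r i * pushVec ψ (a i) e := by
  classical
  funext e
  simp only [pushVec_eq_sum, mul_sum]
  exact sum_comm

theorem pushVec_const_mul [Fintype V₁] (ψ : V₁ → V₂) (r : ℝ) (a : V₁ × V₁ → ℝ) :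
    pushVec ψ (fun e' => r * a e') = fun e => r * pushVec ψ a e := by
  classical
  funext e
  simp only [pushVec_eq_sum, mul_sum]

end EdgeVectors

namespace CoverSystem

open Finset Filter Topology MeasureTheory TopologicalSpace Matrix

section Topology

variable {S : CoverSystem}

theorem continuous_proj (n : ℕ) : Continuous fun x : S.X => S.proj x n :=
  (continuous_apply n).comp continuous_subtype_val

theorem isClopen_USet {n : ℕ} (v : S.V n) : IsClopen (S.USet v) :=
  (isClopen_discrete {v}).preimage (continuous_proj n)

theorem measurableSet_USet {n : ℕ} (v : S.V n) : MeasurableSet (S.USet v) :=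
  (isClopen_USet v).isOpen.measurableSet

theorem proj_eq_proj_of_le {x y : S.X} {n m : ℕ} (hnm : n ≤ m)
    (h : S.proj x m = S.proj y m) : S.proj x n = S.proj y n := by
  induction m, hnm using Nat.le_induction with
  | base => exact h
  | succ m _ ih =>
    refine ih ?_
    change x.1 m = y.1 m
    rw [← x.2 m, ← y.2 m]
    exact congrArg (S.φ m) h

theorem isClosedEmbedding_val : IsClosedEmbedding (Subtype.val : S.X → ∀ n, S.V n) := by
  refine IsClosed.isClosedEmbedding_subtypeVal
    (s := {x : ∀ n, S.V n | ∀ n, S.φ n (x (n + 1)) = x n}) ?_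
  simp only [Set.ofPred_forall]
  exact isClosed_iInter fun n => isClosed_eq
    (continuous_of_discreteTopology.comp (continuous_apply (n + 1))) (continuous_apply n)

instance : CompactSpace S.X := isClosedEmbedding_val.compactSpace

instance : MetrizableSpace S.X := isClosedEmbedding_val.isEmbedding.metrizableSpace

theorem surjective_φ (n : ℕ) : Function.Surjective (S.φ n) := fun v => by
  obtain ⟨u, hu⟩ := (S.G n).surj_init v
  obtain ⟨v', u', -, h⟩ := (S.cover n).edgeSurj _ hu
  exact ⟨v', congrArg Prod.fst h⟩

theorem nonempty_X [Nonempty (S.V 0)] : Nonempty S.X :=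
  let x : ∀ n, S.V n := fun n =>
    Nat.rec (motive := S.V) (Classical.arbitrary _) (fun n => Function.surjInv (surjective_φ n)) n
  ⟨⟨x, fun n => Function.surjInv_eq (surjective_φ n) (x n)⟩⟩

def cylinders (S : CoverSystem) : Set (Set S.X) := {U | ∃ n, ∃ v : S.V n, S.USet v = U}

theorem isTopologicalBasis_cylinders : IsTopologicalBasis S.cylinders := by
  refine isTopologicalBasis_of_isOpen_of_nhds (by rintro _ ⟨n, v, rfl⟩; exact (isClopen_USet v).2)
    fun x U hxU hU => ?_
  obtain ⟨W, hW, rfl⟩ := isOpen_induced_iff.1 hU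
  obtain ⟨I, u, hu, hsub⟩ := isOpen_pi_iff.1 hW x.1 hxU
  refine ⟨S.USet (S.proj x (I.sup id)), ⟨_, _, rfl⟩, rfl, fun y hy => hsub fun i hi => ?_⟩
  have : y.1 i = x.1 i := proj_eq_proj_of_le (Finset.le_sup (f := id) hi) hy
  exact this ▸ (hu i hi).2

theorem isPiSystem_cylinders : IsPiSystem S.cylinders := by
  have key : ∀ {n m} (v : S.V n) (w : S.V m), n ≤ m → (S.USet v ∩ S.USet w).Nonempty →
      S.USet v ∩ S.USet w ∈ S.cylinders := by
    rintro n m v w hnm ⟨x, hxv, hxw⟩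
    refine ⟨m, w, (Set.inter_eq_right.2 fun y hy => ?_).symm⟩
    exact (proj_eq_proj_of_le hnm (hy.trans hxw.symm)).trans hxv
  rintro _ ⟨n, v, rfl⟩ _ ⟨m, w, rfl⟩ hne
  rcases le_total n m with h | h
  · exact key v w h hne
  · rw [Set.inter_comm] at hne ⊢
    exact key w v h hne

theorem ext_of_measure_USet_eq {μ ν : Measure S.X} [IsProbabilityMeasure μ]
    [IsProbabilityMeasure ν] (h : ∀ n (v : S.V n), μ (S.USet v) = ν (S.USet v)) : μ = ν := by
  have hcount : S.cylinders.Countable := by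
    have : S.cylinders = ⋃ n, Set.range (@USet S n) := by ext; simp [cylinders]
    exact this ▸ Set.countable_iUnion fun n => Set.countable_range _
  have := isTopologicalBasis_cylinders.secondCountableTopology hcount
  exact ext_of_generate_finite _ isTopologicalBasis_cylinders.borel_eq_generateFrom
    isPiSystem_cylinders (by rintro _ ⟨n, v, rfl⟩; exact h n v) (by simp)

end Topology

section LimitMap

variable {S : CoverSystem} {f : S.X → S.X}

theorem IsLimitMap.proj_eq_proj (hf : S.IsLimitMap f) {x y : S.X} {n : ℕ}
    (h : S.proj x (n + 1) = S.proj y (n + 1)) : S.proj (f x) n = S.proj (f y) n := by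
  change (f x).1 n = (f y).1 n
  rw [← (f x).2 n, ← (f y).2 n]
  exact (S.cover n).posDir _ _ _ (hf x (n + 1)) (h ▸ hf y (n + 1))

theorem IsLimitMap.continuous (hf : S.IsLimitMap f) : Continuous f := by
  refine continuous_induced_rng.2 (continuous_pi fun n => ?_)
  refine IsLocallyConstant.continuous ((IsLocallyConstant.iff_eventually_eq _).2 fun x => ?_)
  filter_upwards [(isClopen_USet (S.proj x (n + 1))).isOpen.mem_nhds rfl] with y hy
  exact hf.proj_eq_proj hy

def edgeAt (f : S.X → S.X) (n : ℕ) (x : S.X) : S.V n × S.V n := (S.proj x n, S.proj (f x) n)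

theorem UEdge_eq_preimage_edgeAt {n : ℕ} (e : S.V n × S.V n) :
    S.UEdge f e = edgeAt f n ⁻¹' {e} := by
  ext x
  simp [UEdge, edgeAt, Prod.ext_iff]

theorem IsLimitMap.measure_preimage_edgeAt (hf : S.IsLimitMap f) (μ : Measure S.X) {n : ℕ}
    (s : Finset (S.V n × S.V n)) : μ (edgeAt f n ⁻¹' s) = ∑ e ∈ s, μ (S.UEdge f e) := by
  simp only [UEdge_eq_preimage_edgeAt]
  refine (sum_measure_preimage_singleton s fun e _ => ?_).symm
  rw [← UEdge_eq_preimage_edgeAt]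
  exact (measurableSet_USet e.1).inter (hf.continuous.measurable (measurableSet_USet e.2))

theorem IsLimitMap.sum_muVec (hf : S.IsLimitMap f) (μ : Measure S.X) [IsProbabilityMeasure μ]
    (n : ℕ) : ∑ e, S.muVec f μ n e = 1 := by
  simp only [muVec]
  rw [← ENNReal.toReal_sum fun e _ => measure_ne_top μ _, ← hf.measure_preimage_edgeAt]
  simp

theorem IsLimitMap.muVec_eq_pushVec (hf : S.IsLimitMap f) (μ : Measure S.X) [IsFiniteMeasure μ]
    (n : ℕ) : S.muVec f μ n = pushVec (S.φ n) (S.muVec f μ (n + 1)) := by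
  classical
  funext e
  have hU : S.UEdge f e = edgeAt f (n + 1) ⁻¹' ↑({e' | edgeMap (S.φ n) e' = e} : Finset _) := by
    ext x
    simp [UEdge, edgeAt, edgeMap, Prod.ext_iff, proj, x.2 n, (f x).2 n]
  rw [pushVec_eq_sum, muVec, hU, hf.measure_preimage_edgeAt,
    ENNReal.toReal_sum fun e _ => measure_ne_top μ _]
  rfl

theorem IsLimitMap.ext_of_muVec_eq (hf : S.IsLimitMap f) {μ ν : Measure S.X}
    [IsProbabilityMeasure μ] [IsProbabilityMeasure ν] (h : ∀ n, S.muVec f μ n = S.muVec f ν n) : μ = ν := by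
  classical
  refine ext_of_measure_USet_eq fun n v => ?_
  have hU : S.USet v = edgeAt f n ⁻¹' ↑({e | e.1 = v} : Finset (S.V n × S.V n)) := by
    ext x
    simp [USet, edgeAt]
  rw [hU, hf.measure_preimage_edgeAt, hf.measure_preimage_edgeAt]
  exact sum_congr rfl fun e _ => (ENNReal.toReal_eq_toReal_iff' (measure_ne_top _ _)
    (measure_ne_top _ _)).1 (congrFun (h n) e)

end LimitMap

section Winding

variable {S : CoverSystem} {d : ℕ → ℕ} {c : ∀ n, Fin (d n) → Set (S.V n × S.V n)}
  {M : ∀ n, Fin (d (n + 1)) → Fin (d n) → ℕ}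

variable (c M) in
/-- The winding matrix `M̄ₙ` of the paper. -/
noncomputable def windingMatrix (n : ℕ) : Matrix (Fin (d (n + 1))) (Fin (d n)) ℝ :=
  fun i j => (((c n j).ncard : ℝ) / ((c (n + 1) i).ncard : ℝ)) * (M n i j : ℝ)

variable (hcmem : ∀ n i, c n i ∈ circuitsOf (S.G n))
include hcmem

theorem sum_eq_one_of_eq_circComb {n : ℕ} {x : S.V n × S.V n → ℝ} {s : Fin (d n) → ℝ}
    (hx : ∑ e, x e = 1) (hs : x = circComb (c n) s) : ∑ i, s i = 1 := by
  rw [← sum_circComb (fun i => (hcmem n i).ncard_pos), ← hs, hx]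

variable (hM : ∀ n i, pushVec (S.φ n) (circVec (c (n + 1) i)) =
    fun e => ∑ j, (M n i j : ℝ) * circVec (c n j) e)
include hM

theorem pushVec_circTilde (n : ℕ) (i : Fin (d (n + 1))) :
    pushVec (S.φ n) (circTilde (c (n + 1) i)) = circComb (c n) (windingMatrix c M n i) := by
  have hper : ∀ m (j : Fin (d m)), ((c m j).ncard : ℝ) ≠ 0 := fun m j =>
    Nat.cast_ne_zero.2 (hcmem m j).ncard_pos.ne'
  have hunfold : circTilde (c (n + 1) i) =
      fun e' => ((c (n + 1) i).ncard : ℝ)⁻¹ * circVec (c (n + 1) i) e' := rfl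
  rw [hunfold, pushVec_const_mul, hM]
  funext e
  simp only [circComb, windingMatrix, circTilde, mul_sum]
  refine sum_congr rfl fun j _ => ?_
  field_simp [hper]

theorem sum_windingMatrix (n : ℕ) (i : Fin (d (n + 1))) : ∑ j, windingMatrix c M n i j = 1 := by
  have h := congrArg (fun a => ∑ e, a e) (pushVec_circTilde hcmem hM n i)
  simp only [sum_pushVec] at h
  rw [← sum_circComb (fun j => (hcmem n j).ncard_pos), ← h, sum_circTilde (hcmem _ i).ncard_pos]

theorem pushVec_circComb (n : ℕ) (s : Fin (d (n + 1)) → ℝ) :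
    pushVec (S.φ n) (circComb (c (n + 1)) s) = circComb (c n) (s ᵥ* windingMatrix c M n) := by
  have hunfold : circComb (c (n + 1)) s = fun e' => ∑ i, s i * circTilde (c (n + 1) i) e' := rfl
  rw [hunfold, pushVec_sum_mul]
  funext e
  simp only [pushVec_circTilde hcmem hM, circComb, vecMul, dotProduct, mul_sum, sum_mul]
  rw [sum_comm]
  simp only [mul_assoc]

theorem eq_circComb_vecMulDown {a : ∀ n, S.V n × S.V n → ℝ}
    (ha : ∀ n, a n = pushVec (S.φ n) (a (n + 1))) (n k : ℕ) {s : Fin (d (n + k)) → ℝ}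
    (hs : a (n + k) = circComb (c (n + k)) s) :
    a n = circComb (c n) (vecMulDown (ι := fun m => Fin (d m)) (windingMatrix c M) n k s) := by
  induction k with
  | zero => exact hs
  | succ k ih =>
    exact ih ((ha _).trans ((congrArg _ hs).trans (pushVec_circComb hcmem hM (n + k) s)))

theorem abs_sub_le_of_eq_circComb [∀ n, Nonempty (Fin (d n))] {ε : ℕ → ℝ}
    (hεM : ∀ n i j, ε n ≤ windingMatrix c M n i j) {a b : ∀ n, S.V n × S.V n → ℝ}
    (ha : ∀ n, a n = pushVec (S.φ n) (a (n + 1))) (hb : ∀ n, b n = pushVec (S.φ n) (b (n + 1)))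
    (ha₁ : ∀ n, ∑ e, a n e = 1) (hb₁ : ∀ n, ∑ e, b n e = 1) (n k : ℕ)
    {s t : Fin (d (n + k)) → ℝ} (hs₀ : ∀ i, 0 ≤ s i) (ht₀ : ∀ i, 0 ≤ t i)
    (hs : a (n + k) = circComb (c (n + k)) s) (ht : b (n + k) = circComb (c (n + k)) t)
    (e : S.V n × S.V n) :
    |a n e - b n e| ≤ (∏ m ∈ Ico n (n + k), (1 - (d m : ℝ) * ε m)) * 2 := by
  have hW := sum_windingMatrix hcmem hM
  have hs₁ := sum_eq_one_of_eq_circComb hcmem (ha₁ _) hs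
  have ht₁ := sum_eq_one_of_eq_circComb hcmem (hb₁ _) ht
  have hst : ∑ i, |s i - t i| ≤ 2 := by
    calc ∑ i, |s i - t i| ≤ ∑ i, (s i + t i) := sum_le_sum fun i _ =>
          (abs_sub _ _).trans_eq (by rw [abs_of_nonneg (hs₀ i), abs_of_nonneg (ht₀ i)])
      _ = 2 := by rw [sum_add_distrib, hs₁, ht₁]; norm_num
  rw [eq_circComb_vecMulDown hcmem hM ha n k hs, eq_circComb_vecMulDown hcmem hM hb n k ht]
  refine (abs_circComb_sub_le _ _ _ e).trans ?_
  refine (sum_abs_vecMulDown_sub_le (ι := fun m => Fin (d m)) hεM hW n k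
    (hs₁.trans ht₁.symm)).trans ?_
  simp only [Fintype.card_fin]
  exact mul_le_mul_of_nonneg_left hst
    (prod_nonneg fun m _ => by simpa using one_sub_card_mul_nonneg (hεM m) (hW m))

theorem eq_of_forall_eq_circComb {ε : ℕ → ℝ} (hεM : ∀ n i j, ε n ≤ windingMatrix c M n i j)
    (hprod : ∀ n, Tendsto (fun K => ∏ i ∈ Ico n K, (1 - (d i : ℝ) * ε i)) atTop (𝓝 0))
    {a b : ∀ n, S.V n × S.V n → ℝ}
    (ha : ∀ n, a n = pushVec (S.φ n) (a (n + 1))) (hb : ∀ n, b n = pushVec (S.φ n) (b (n + 1)))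
    (ha₁ : ∀ n, ∑ e, a n e = 1) (hb₁ : ∀ n, ∑ e, b n e = 1)
    (has : ∀ n, ∃ s, (∀ i, 0 ≤ s i) ∧ a n = circComb (c n) s)
    (hbs : ∀ n, ∃ s, (∀ i, 0 ≤ s i) ∧ b n = circComb (c n) s) : a = b := by
  have : ∀ n, Nonempty (Fin (d n)) := fun n => by
    obtain ⟨s, -, hs⟩ := has n
    have hs₁ := sum_eq_one_of_eq_circComb hcmem (ha₁ n) hs
    by_contra h
    simp [not_nonempty_iff.1 h] at hs₁
  funext n e
  have hbound : ∀ k, |a n e - b n e| ≤ (∏ m ∈ Ico n (n + k), (1 - (d m : ℝ) * ε m)) * 2 := by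
    intro k
    obtain ⟨s, hs₀, hs⟩ := has (n + k)
    obtain ⟨t, ht₀, ht⟩ := hbs (n + k)
    exact abs_sub_le_of_eq_circComb hcmem hM hεM ha hb ha₁ hb₁ n k hs₀ ht₀ hs ht e
  have hshift : Tendsto (fun k => n + k) atTop atTop := by
    simpa only [add_comm] using tendsto_add_atTop_nat n
  have hlim := ((hprod n).comp hshift).mul_const 2
  rw [zero_mul] at hlim
  exact sub_eq_zero.1 (abs_nonpos_iff.1 (ge_of_tendsto' hlim hbound))

end Winding

end CoverSystem

theorem unique_ergodicity_from_winding_matrices_general (S : CoverSystem)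
    (f : S.X → S.X) (hf : S.IsLimitMap f)
    (d : ℕ → ℕ) (c : ∀ n, Fin (d n) → Set (S.V n × S.V n))
    (hcmem : ∀ (n : ℕ) (i : Fin (d n)), c n i ∈ circuitsOf (S.G n))
    (hCall : ∀ μ : MeasureTheory.Measure S.X, MeasureTheory.IsProbabilityMeasure μ →
      S.Invariant f μ →
      ∀ n : ℕ, ∃ st : Fin (d n) → ℝ, (∀ i, 0 ≤ st i) ∧
        ∀ e, S.muVec f μ n e = ∑ i, st i * circTilde (c n i) e)
    (M : ∀ n, Fin (d (n + 1)) → Fin (d n) → ℕ)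
    (hM : ∀ (n : ℕ) (i : Fin (d (n + 1))),
      pushVec (S.φ n) (circVec (c (n + 1) i)) =
        fun e => ∑ j, (M n i j : ℝ) * circVec (c n j) e)
    (ε : ℕ → ℝ)
    (hεM : ∀ (n : ℕ) (i : Fin (d (n + 1))) (j : Fin (d n)),
      ε n ≤ (((c n j).ncard : ℝ) / ((c (n + 1) i).ncard : ℝ)) * (M n i j : ℝ))
    (hprod : ∀ n : ℕ, Filter.Tendsto
      (fun K : ℕ => ∏ i ∈ Finset.Ico n K, (1 - (d i : ℝ) * ε i))
      Filter.atTop (nhds 0)) :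
    ∃! μ : MeasureTheory.Measure S.X,
      MeasureTheory.IsProbabilityMeasure μ ∧ S.Invariant f μ := by
  obtain ⟨m, -, hm⟩ := exists_le_pos_of_tendsto_prod_one_sub_mul (hprod 0)
  obtain ⟨e, -⟩ := (hcmem m ⟨0, hm⟩).nonempty
  have : Nonempty (S.V 0) := ⟨S.phiLE (Nat.zero_le m) e.1⟩
  have := S.nonempty_X
  have hinv : ∀ {μ}, MeasurePreserving f μ μ → S.Invariant f μ :=
    fun hμ B hB => hμ.measure_preimage hB.nullMeasurableSet
  have hexpr : ∀ μ, IsProbabilityMeasure μ → S.Invariant f μ →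
      ∀ n, ∃ s, (∀ i, 0 ≤ s i) ∧ S.muVec f μ n = circComb (c n) s := fun μ hμ hμf n => by
    obtain ⟨s, hs, hμs⟩ := hCall μ hμ hμf n
    exact ⟨s, hs, funext hμs⟩
  obtain ⟨μ, hμ, hμf⟩ := exists_isProbabilityMeasure_measurePreserving hf.continuous
  refine ⟨μ, ⟨hμ, hinv hμf⟩, fun ν ⟨hν, hνf⟩ => hf.ext_of_muVec_eq (congrFun ?_)⟩
  exact CoverSystem.eq_of_forall_eq_circComb hcmem hM hεM hprod (hf.muVec_eq_pushVec ν)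
    (hf.muVec_eq_pushVec μ) (hf.sum_muVec ν) (hf.sum_muVec μ) (hexpr ν hν hνf)
    (hexpr μ hμ (hinv hμf))

/-- If the winding matrices of a system of circuits
expressing all invariant measures have entries bounded below by `ε_n` with
`Π (1 - d_n ε_n) = 0`, then the inverse limit is uniquely ergodic. -/
theorem unique_ergodicity_from_winding_matrices (S : CoverSystem)
    (f : S.X → S.X) (hf : S.IsLimitMap f)
    (d : ℕ → ℕ) (c : ∀ n, Fin (d n) → Set (S.V n × S.V n))
    (hcmem : ∀ (n : ℕ) (i : Fin (d n)), c n i ∈ circuitsOf (S.G n))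
    (hcinj : ∀ n, Function.Injective (c n))
    (hCall : ∀ μ : MeasureTheory.Measure S.X, MeasureTheory.IsProbabilityMeasure μ →
      S.Invariant f μ →
      ∀ n : ℕ, ∃ st : Fin (d n) → ℝ, (∀ i, 0 ≤ st i) ∧
        ∀ e, S.muVec f μ n e = ∑ i, st i * circTilde (c n i) e)
    (M : ∀ n, Fin (d (n + 1)) → Fin (d n) → ℕ)
    (hM : ∀ (n : ℕ) (i : Fin (d (n + 1))),
      pushVec (S.φ n) (circVec (c (n + 1) i)) =
        fun e => ∑ j, (M n i j : ℝ) * circVec (c n j) e)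
    (ε : ℕ → ℝ) (hε : ∀ n, 0 < ε n)
    (hεM : ∀ (n : ℕ) (i : Fin (d (n + 1))) (j : Fin (d n)),
      ε n ≤ (((c n j).ncard : ℝ) / ((c (n + 1) i).ncard : ℝ)) * (M n i j : ℝ))
    (hprod : ∀ n : ℕ, Filter.Tendsto
      (fun K : ℕ => ∏ i ∈ Finset.Ico n K, (1 - (d i : ℝ) * ε i))
      Filter.atTop (nhds 0)) :
    ∃! μ : MeasureTheory.Measure S.X,
      MeasureTheory.IsProbabilityMeasure μ ∧ S.Invariant f μ :=
  unique_ergodicity_from_winding_matrices_general S f hf d c hcmem hCall M hM ε hεM hprod
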